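/- Let $g : [0,1] \to \mathbb{R}$ be continuous, set $\psi(\rho) = \max_{0 \le \sigma \le \rho}|g(\sigma)|$ and $\rho_0 = \sup(\{0\} \cup \{\rho \in [0,1] : g \equiv 0 \text{ on } [0,\rho]\})$, and define $\widehat G'(\rho) = \frac{2}{\rho}\int_0^\rho g(\sigma)\sigma\,d\sigma$ and $\widehat G''(\rho) = -\frac{1}{\rho}\widehat G'(\rho) + 2g(\rho)$ for $\rho \in (0,1]$. Then for all $\rho \in (0,1]$: (a) $|\widehat G'(\rho)| \le \psi(\rho)\,\frac{\rho^2 - \rho_0^2}{\rho}$, and (b) $\widehat G''(\rho)^2 + \left(\frac{\widehat G'(\rho)}{\rho}\right)^2 \le 10\,\psi(\rho)^2$. -/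

import Mathlib

/-!
On `[0, ρ₀)` the density `g` vanishes, so the integral `∫₀^ρ g σ σ dσ` only sees `[ρ₀, ρ]`,
where `|g| ≤ ψ(ρ)`; integrating the weight `σ` gives (a). Since `ψ ≥ 0`, (a) implies
`|Ĝ'(ρ)/ρ| ≤ ψ(ρ)`, and then `|Ĝ''(ρ)| ≤ |Ĝ'(ρ)/ρ| + 2|g(ρ)| ≤ 3ψ(ρ)`,
so (b) holds with `9 + 1 = 10`.
-/

open Set MeasureTheory

/-- The paper's `ρ₀`; the `{0}` makes it `0` when `g` vanishes on no interval `[0, ρ]`. -/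
noncomputable def vanishingRadius (g : ℝ → ℝ) : ℝ :=
  sSup ({0} ∪ {ρ | ρ ∈ Icc (0:ℝ) 1 ∧ ∀ σ ∈ Icc 0 ρ, g σ = 0})

section VanishingRadius

variable {g : ℝ → ℝ}

lemma bddAbove_vanishingRadius_set :
    BddAbove ({0} ∪ {ρ | ρ ∈ Icc (0:ℝ) 1 ∧ ∀ σ ∈ Icc 0 ρ, g σ = 0}) := by
  refine ⟨1, ?_⟩
  rintro x (rfl | ⟨hx, -⟩)
  exacts [zero_le_one, hx.2]

lemma vanishingRadius_nonneg : 0 ≤ vanishingRadius g :=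
  le_csSup bddAbove_vanishingRadius_set (Or.inl rfl)

lemma eq_zero_of_lt_vanishingRadius {σ : ℝ} (hσ : 0 ≤ σ) (hlt : σ < vanishingRadius g) :
    g σ = 0 := by
  rw [vanishingRadius] at hlt
  obtain ⟨ρ, hρ, hσρ⟩ :=
    exists_lt_of_lt_csSup (union_nonempty.2 (Or.inl (singleton_nonempty 0))) hlt
  rcases hρ with rfl | ⟨-, hρ⟩
  · exact absurd hσ hσρ.not_ge
  · exact hρ σ ⟨hσ, hσρ.le⟩

lemma integral_mul_id_eq_zero_of_le_vanishingRadius {c : ℝ} (hc0 : 0 ≤ c)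
    (hc : c ≤ vanishingRadius g) :
    ∫ σ in (0:ℝ)..c, g σ * σ = 0 := by
  refine intervalIntegral.integral_zero_ae ?_
  filter_upwards [volume.ae_ne c] with σ hσc hσ
  rw [uIoc_of_le hc0] at hσ
  rw [eq_zero_of_lt_vanishingRadius hσ.1.le ((lt_of_le_of_ne hσ.2 hσc).trans_le hc), zero_mul]

lemma sSup_abs_image_eq_zero_of_lt_vanishingRadius {ρ : ℝ} (hρ : 0 ≤ ρ)
    (hlt : ρ < vanishingRadius g) : sSup ((fun σ => |g σ|) '' Icc 0 ρ) = 0 := by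
  have hzero : EqOn (fun σ => |g σ|) (fun _ => 0) (Icc 0 ρ) := fun σ hσ => by
    simp only [eq_zero_of_lt_vanishingRadius hσ.1 (hσ.2.trans_lt hlt), abs_zero]
  rw [hzero.image_eq, (nonempty_Icc.2 hρ).image_const, csSup_singleton]

end VanishingRadius

lemma abs_integral_mul_id_le {f : ℝ → ℝ} {a b M : ℝ} (ha : 0 ≤ a) (hab : a ≤ b)
    (hf : ∀ σ ∈ Ioc a b, |f σ| ≤ M) : |∫ σ in a..b, f σ * σ| ≤ M * ((b ^ 2 - a ^ 2) / 2) := by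
  calc |∫ σ in a..b, f σ * σ| ≤ ∫ σ in a..b, M * σ := by
        refine intervalIntegral.norm_integral_le_of_norm_le (f := fun σ => f σ * σ) hab
          (ae_of_all _ fun σ hσ => ?_)
          ((continuous_const.mul continuous_id).intervalIntegrable (μ := volume) _ _)
        have hσ0 : 0 ≤ σ := ha.trans hσ.1.le
        rw [Real.norm_eq_abs, abs_mul, abs_of_nonneg hσ0]
        exact mul_le_mul_of_nonneg_right (hf σ hσ) hσ0
    _ = M * ((b ^ 2 - a ^ 2) / 2) := by rw [intervalIntegral.integral_const_mul, integral_id]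

lemma abs_two_div_mul_integral_mul_id_le {g : ℝ → ℝ} (hg : ContinuousOn g (Icc 0 1)) {ρ : ℝ}
    (hρ : ρ ∈ Ioc 0 1) :
    |(2 / ρ) * ∫ σ in (0:ℝ)..ρ, g σ * σ| ≤
      sSup ((fun σ => |g σ|) '' Icc 0 ρ) * ((ρ ^ 2 - vanishingRadius g ^ 2) / ρ) := by
  obtain ⟨hρ0, hρ1⟩ := hρ
  rcases lt_or_ge ρ (vanishingRadius g) with hlt | hle
  · rw [integral_mul_id_eq_zero_of_le_vanishingRadius hρ0.le hlt.le,
      sSup_abs_image_eq_zero_of_lt_vanishingRadius hρ0.le hlt]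
    simp
  set ρ₀ := vanishingRadius g
  have hgρ : ContinuousOn g (Icc 0 ρ) := hg.mono (Icc_subset_Icc_right hρ1)
  have hint : ∀ a b, a ∈ Icc 0 ρ → b ∈ Icc 0 ρ →
      IntervalIntegrable (fun σ => g σ * σ) volume a b := fun a b ha hb =>
    ((hgρ.mono (uIcc_subset_Icc ha hb)).mul continuousOn_id).intervalIntegrable
  have hsplit : ∫ σ in (0:ℝ)..ρ, g σ * σ = ∫ σ in ρ₀..ρ, g σ * σ := by
    rw [← intervalIntegral.integral_add_adjacent_intervals
      (hint 0 ρ₀ (left_mem_Icc.2 hρ0.le) ⟨vanishingRadius_nonneg, hle⟩)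
      (hint ρ₀ ρ ⟨vanishingRadius_nonneg, hle⟩ (right_mem_Icc.2 hρ0.le)),
      integral_mul_id_eq_zero_of_le_vanishingRadius vanishingRadius_nonneg le_rfl, zero_add]
  have hbound := abs_integral_mul_id_le vanishingRadius_nonneg hle fun σ hσ =>
    hgρ.abs.le_sSup_image_Icc ⟨vanishingRadius_nonneg.trans hσ.1.le, hσ.2⟩
  rw [hsplit, abs_mul, abs_of_pos (by positivity : (0:ℝ) < 2 / ρ)]
  calc 2 / ρ * |∫ σ in ρ₀..ρ, g σ * σ|
      ≤ 2 / ρ * (sSup ((fun σ => |g σ|) '' Icc 0 ρ) * ((ρ ^ 2 - ρ₀ ^ 2) / 2)) := by gcongr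
    _ = _ := by field_simp

lemma sq_neg_add_two_mul_add_sq_le {x y M : ℝ} (hx : |x| ≤ M) (hy : |y| ≤ M) :
    (-x + 2 * y) ^ 2 + x ^ 2 ≤ 10 * M ^ 2 := by
  have hxy : |-x + 2 * y| ≤ 3 * M := by
    calc |-x + 2 * y| ≤ |-x| + |2 * y| := abs_add_le _ _
      _ = |x| + 2 * |y| := by rw [abs_neg, abs_mul, abs_two]
      _ ≤ 3 * M := by linarith
  nlinarith [sq_le_sq' (abs_le.1 hxy).1 (abs_le.1 hxy).2, sq_le_sq' (abs_le.1 hx).1 (abs_le.1 hx).2]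

/-- Lemma 4.3(iii): derivative estimates for the regular part of the radial potential:
`|Ĝ'(ρ)| ≤ ψ(ρ)(ρ² - ρ₀²)/ρ` and `Ĝ''(ρ)² + (Ĝ'(ρ)/ρ)² ≤ 10 ψ(ρ)²`. -/
theorem radial_potential_derivative_estimates (g : ℝ → ℝ)
    (hg : ContinuousOn g (Set.Icc 0 1))
    (ψ : ℝ → ℝ) (hψ : ∀ ρ, ψ ρ = sSup ((fun σ => |g σ|) '' Set.Icc 0 ρ))
    (ρ₀ : ℝ)
    (hρ₀ : ρ₀ = sSup ({0} ∪ {ρ | ρ ∈ Set.Icc (0:ℝ) 1 ∧ ∀ σ ∈ Set.Icc 0 ρ, g σ = 0}))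
    (G' G'' : ℝ → ℝ)
    (hG' : ∀ ρ, G' ρ = (2 / ρ) * ∫ σ in (0:ℝ)..ρ, g σ * σ)
    (hG'' : ∀ ρ, G'' ρ = -(1 / ρ) * G' ρ + 2 * g ρ) :
    ∀ ρ ∈ Set.Ioc (0:ℝ) 1,
      |G' ρ| ≤ ψ ρ * ((ρ ^ 2 - ρ₀ ^ 2) / ρ) ∧
      G'' ρ ^ 2 + (G' ρ / ρ) ^ 2 ≤ 10 * ψ ρ ^ 2 := by
  intro ρ hρ
  have hderiv : |G' ρ| ≤ ψ ρ * ((ρ ^ 2 - ρ₀ ^ 2) / ρ) := by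
    rw [hG', hψ, hρ₀]
    exact abs_two_div_mul_integral_mul_id_le hg hρ
  obtain ⟨hρ0, hρ1⟩ := hρ
  have hgρ : |g ρ| ≤ ψ ρ :=
    hψ ρ ▸ (hg.mono (Icc_subset_Icc_right hρ1)).abs.le_sSup_image_Icc (right_mem_Icc.2 hρ0.le)
  have hψ0 : 0 ≤ ψ ρ := (abs_nonneg _).trans hgρ
  have hratio : |G' ρ / ρ| ≤ ψ ρ := by
    rw [abs_div, abs_of_pos hρ0, div_le_iff₀ hρ0]
    refine hderiv.trans (mul_le_mul_of_nonneg_left ?_ hψ0)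
    rw [div_le_iff₀ hρ0]
    nlinarith [sq_nonneg ρ₀]
  refine ⟨hderiv, ?_⟩
  rw [hG'', show -(1 / ρ) * G' ρ = -(G' ρ / ρ) by ring]
  exact sq_neg_add_two_mul_add_sq_le hratio hgρ
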